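/- arXiv:1803.01289 — 2 statements merged into one kernel-verified Lean document; each statement's English description precedes it below -/
import Mathlib

section
/- Let G be a Lie group (a smooth manifold modeled on a finite-dimensional real normed space with smooth multiplication and inversion). Suppose ω assigns to each g ∈ G an alternating ℝ-bilinear form ω_g on the tangent space T_gG, and suppose ω is multiplicative in the sense that for all g, h ∈ G, all x, x' ∈ T_gG and all y, y' ∈ T_hG, ω_{gh}(D(r_h)_g x + D(l_g)_h y, D(r_h)_g x' + D(l_g)_h y') = ω_g(x, x') + ω_h(y, y'). Then ω_g = 0 for every g ∈ G. -/
/-!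
At the identity the translations `l₁` and `r₁` are the identity, so multiplicativity with
`g = h = 1` reads `ω₁(2x, 2x') = 2 ω₁(x, x')`; bilinearity makes the left side `4 ω₁(x, x')`,
whence `ω₁ = 0`. For arbitrary `g`, take `h = g⁻¹` and `y = y' = 0`: the left side is a value of
`ω₁`, so `ω_g(x, x') = 0`.
-/

open Manifold

theorem AlternatingMap.ext_fin_two {R M N : Type*} [Semiring R] [AddCommMonoid M] [Module R M]
    [AddCommMonoid N] [Module R N] {f g : M [⋀^Fin 2]→ₗ[R] N}
    (h : ∀ x y, f ![x, y] = g ![x, y]) : f = g :=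
  AlternatingMap.ext fun v => by
    obtain ⟨x, y, rfl⟩ : ∃ x y, v = ![x, y] := ⟨v 0, v 1, (FinVec.etaExpand_eq v).symm⟩
    exact h x y

theorem AlternatingMap.eq_zero_of_map_add_self {R M N : Type*} [CommSemiring R]
    [AddCommMonoid M] [Module R M] [AddCommGroup N] [Module R N] [IsAddTorsionFree N]
    (f : M [⋀^Fin 2]→ₗ[R] N) (h : ∀ x y, f ![x + x, y + y] = f ![x, y] + f ![x, y]) :
    f = 0 := by
  refine AlternatingMap.ext_fin_two fun x y => ?_
  have hscale : f ![x + x, y + y] = (2 ^ 2 : R) • f ![x, y] := by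
    convert f.map_smul_univ (fun _ => 2) ![x, y] using 2
    · ext i; fin_cases i <;> simp [two_smul]
    · simp
  rw [h, sq, mul_smul, two_smul R, two_smul R] at hscale
  have h2 : 2 • f ![x, y] = 0 := by rw [two_nsmul]; exact add_eq_right.mp hscale.symm
  exact two_nsmul_eq_zero.mp h2

theorem multiplicative_two_form_on_lie_group_is_zero_general
    {E : Type*} [NormedAddCommGroup E] [NormedSpace ℝ E]
    {G : Type*} [TopologicalSpace G] [ChartedSpace E G] [Group G]
    (ω : ∀ g : G, (TangentSpace 𝓘(ℝ, E) g) [⋀^Fin 2]→ₗ[ℝ] ℝ)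
    (hmult : ∀ g h : G, ∀ x x' : TangentSpace 𝓘(ℝ, E) g, ∀ y y' : TangentSpace 𝓘(ℝ, E) h,
      ω (g * h)
        ![mfderiv 𝓘(ℝ, E) 𝓘(ℝ, E) (fun a : G => a * h) g x
            + mfderiv 𝓘(ℝ, E) 𝓘(ℝ, E) (fun b : G => g * b) h y,
          mfderiv 𝓘(ℝ, E) 𝓘(ℝ, E) (fun a : G => a * h) g x'
            + mfderiv 𝓘(ℝ, E) 𝓘(ℝ, E) (fun b : G => g * b) h y']
        = ω g ![x, x'] + ω h ![y, y']) :
    ∀ g : G, ω g = 0 := by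
  have hω₁ : ω 1 = 0 := by
    refine (ω 1).eq_zero_of_map_add_self fun x x' => ?_
    have mfderiv_eq_id : ∀ f : G → G, f = id →
        mfderiv 𝓘(ℝ, E) 𝓘(ℝ, E) f 1 = ContinuousLinearMap.id ℝ E :=
      fun f hf => hf ▸ mfderiv_id
    have := hmult 1 1 x x' x x'
    rwa [mfderiv_eq_id _ (funext mul_one), mfderiv_eq_id _ (funext one_mul), one_mul] at this
  intro g
  refine AlternatingMap.ext_fin_two fun x x' => ?_
  have := hmult g g⁻¹ x x' 0 0
  rw [mul_inv_cancel, hω₁, (ω g⁻¹).map_coord_zero 0 rfl] at this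
  simpa using this.symm

/-- If a family `ω` of alternating bilinear forms on the tangent spaces of a
Lie group `G` is multiplicative (i.e. satisfies the symplectic-groupoid compatibility condition
`m^*ω = π₁^*ω + π₂^*ω`), then `ω` vanishes identically. -/
theorem multiplicative_two_form_on_lie_group_is_zero
    {E : Type*} [NormedAddCommGroup E] [NormedSpace ℝ E] [FiniteDimensional ℝ E]
    {G : Type*} [TopologicalSpace G] [ChartedSpace E G] [Group G]
    [IsManifold 𝓘(ℝ, E) (⊤ : ℕ∞) G] [LieGroup 𝓘(ℝ, E) (⊤ : ℕ∞) G]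
    (ω : ∀ g : G, (TangentSpace 𝓘(ℝ, E) g) [⋀^Fin 2]→ₗ[ℝ] ℝ)
    (hmult : ∀ g h : G, ∀ x x' : TangentSpace 𝓘(ℝ, E) g, ∀ y y' : TangentSpace 𝓘(ℝ, E) h,
      ω (g * h)
        ![mfderiv 𝓘(ℝ, E) 𝓘(ℝ, E) (fun a : G => a * h) g x
            + mfderiv 𝓘(ℝ, E) 𝓘(ℝ, E) (fun b : G => g * b) h y,
          mfderiv 𝓘(ℝ, E) 𝓘(ℝ, E) (fun a : G => a * h) g x'
            + mfderiv 𝓘(ℝ, E) 𝓘(ℝ, E) (fun b : G => g * b) h y']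
        = ω g ![x, x'] + ω h ![y, y']) :
    ∀ g : G, ω g = 0 :=
  multiplicative_two_form_on_lie_group_is_zero_general ω hmult
end

section
/- Let G be a Lie group (a smooth manifold modeled on a finite-dimensional real normed space with smooth multiplication and inversion) whose tangent space at the identity T_eG is nontrivial (G has positive dimension). Then there is no family ω assigning to each g ∈ G a nondegenerate alternating ℝ-bilinear form ω_g on T_gG such that for all g, h ∈ G, all x, x' ∈ T_gG and all y, y' ∈ T_hG, ω_{gh}(D(r_h)_g x + D(l_g)_h y, D(r_h)_g x' + D(l_g)_h y') = ω_g(x, x') + ω_h(y, y'). In particular, there are no symplectic Lie groupoids over a point. -/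
/-!
At `g = h = 1` both translations are the identity, so multiplicativity says that `ω 1` is additive
in the sense `ω₁(x + y, x' + y') = ω₁(x, x') + ω₁(y, y')`. Taking `x' = y = 0` shows that `ω 1`
vanishes identically, which a nondegenerate form on a nontrivial space cannot do.
-/

open Manifold

theorem MultilinearMap.map_eq_zero_of_map_add_add {R M N : Type*} [CommSemiring R]
    [AddCommMonoid M] [Module R M] [AddCommMonoid N] [Module R N]
    (β : MultilinearMap R (fun _ : Fin 2 => M) N)
    (h : ∀ x x' y y' : M, β ![x + y, x' + y'] = β ![x, x'] + β ![y, y']) (x y : M) :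
    β ![x, y] = 0 := by
  simpa [β.map_coord_zero 1 (rfl : ![x, (0 : M)] 1 = 0),
    β.map_coord_zero 0 (rfl : ![(0 : M), y] 0 = 0)] using h x 0 0 y

theorem no_symplectic_lie_groupoid_over_point_general
    {E : Type*} [NormedAddCommGroup E] [NormedSpace ℝ E]
    {G : Type*} [TopologicalSpace G] [ChartedSpace E G] [Group G]
    [Nontrivial (TangentSpace 𝓘(ℝ, E) (1 : G))] :
    ¬ ∃ ω : ∀ g : G, (TangentSpace 𝓘(ℝ, E) g) [⋀^Fin 2]→ₗ[ℝ] ℝ,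
      (∀ g : G, ∀ x : TangentSpace 𝓘(ℝ, E) g, x ≠ 0 →
        ∃ y : TangentSpace 𝓘(ℝ, E) g, ω g ![x, y] ≠ 0) ∧
      (∀ g h : G, ∀ x x' : TangentSpace 𝓘(ℝ, E) g, ∀ y y' : TangentSpace 𝓘(ℝ, E) h,
        ω (g * h)
          ![mfderiv 𝓘(ℝ, E) 𝓘(ℝ, E) (fun a : G => a * h) g x
              + mfderiv 𝓘(ℝ, E) 𝓘(ℝ, E) (fun b : G => g * b) h y,
            mfderiv 𝓘(ℝ, E) 𝓘(ℝ, E) (fun a : G => a * h) g x'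
              + mfderiv 𝓘(ℝ, E) 𝓘(ℝ, E) (fun b : G => g * b) h y']
          = ω g ![x, x'] + ω h ![y, y']) := by
  rintro ⟨ω, hnd, hmul⟩
  have hadd : ∀ x x' y y' : TangentSpace 𝓘(ℝ, E) (1 : G),
      ω 1 ![x + y, x' + y'] = ω 1 ![x, x'] + ω 1 ![y, y'] := by
    have h := hmul 1 1
    rw [show (fun a : G => a * 1) = id from funext mul_one,
      show (fun b : G => 1 * b) = id from funext one_mul, mfderiv_id, mul_one] at h
    simpa only [ContinuousLinearMap.id_apply] using h
  obtain ⟨x, hx⟩ := exists_ne (0 : TangentSpace 𝓘(ℝ, E) (1 : G))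
  obtain ⟨y, hy⟩ := hnd 1 x hx
  exact hy ((ω 1).toMultilinearMap.map_eq_zero_of_map_add_add hadd x y)

/-- A positive-dimensional Lie group `G` admits no family of nondegenerate
alternating bilinear forms on its tangent spaces satisfying the multiplicativity condition
`m^*ω = π₁^*ω + π₂^*ω`; in particular there are no symplectic Lie groupoids over a point. -/
theorem no_symplectic_lie_groupoid_over_point
    {E : Type*} [NormedAddCommGroup E] [NormedSpace ℝ E] [FiniteDimensional ℝ E]
    {G : Type*} [TopologicalSpace G] [ChartedSpace E G] [Group G]
    [IsManifold 𝓘(ℝ, E) (⊤ : ℕ∞) G] [LieGroup 𝓘(ℝ, E) (⊤ : ℕ∞) G]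
    [Nontrivial (TangentSpace 𝓘(ℝ, E) (1 : G))] :
    ¬ ∃ ω : ∀ g : G, (TangentSpace 𝓘(ℝ, E) g) [⋀^Fin 2]→ₗ[ℝ] ℝ,
      (∀ g : G, ∀ x : TangentSpace 𝓘(ℝ, E) g, x ≠ 0 →
        ∃ y : TangentSpace 𝓘(ℝ, E) g, ω g ![x, y] ≠ 0) ∧
      (∀ g h : G, ∀ x x' : TangentSpace 𝓘(ℝ, E) g, ∀ y y' : TangentSpace 𝓘(ℝ, E) h,
        ω (g * h)
          ![mfderiv 𝓘(ℝ, E) 𝓘(ℝ, E) (fun a : G => a * h) g x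
              + mfderiv 𝓘(ℝ, E) 𝓘(ℝ, E) (fun b : G => g * b) h y,
            mfderiv 𝓘(ℝ, E) 𝓘(ℝ, E) (fun a : G => a * h) g x'
              + mfderiv 𝓘(ℝ, E) 𝓘(ℝ, E) (fun b : G => g * b) h y']
          = ω g ![x, x'] + ω h ![y, y']) :=
  no_symplectic_lie_groupoid_over_point_general
end
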